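/- arXiv:1806.00339 — 8 statements merged into one kernel-verified Lean document; each statement's English description precedes it below -/
import Mathlib

section
/- For the little q-Legendre Haar weights, sum_{k=0}^n h(k) < h(n)/(1-q) for all n in ℕ. -/
/-!
Since `q * h (n + 1) = (1 - q ^ (2 * n + 3)) / (q ^ n * (1 - q)) ≥ h n`, we have
`h k ≤ q ^ (n - k) * h n` for `k ≤ n`, so `∑_{k ≤ n} h k` is dominated by the geometric series
`h n * ∑_j q ^ j = h n / (1 - q)`, strictly because `h 0 > 0`.
-/

open Finset

theorem sum_range_succ_lt_div_one_sub_of_le_mul {K : Type*} [Field K] [LinearOrder K]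
    [IsStrictOrderedRing K] {q : K} (hq0 : 0 < q) (hq1 : q < 1) {a : ℕ → K} (ha0 : 0 < a 0)
    (ha : ∀ k, a k ≤ q * a (k + 1)) (n : ℕ) :
    ∑ k ∈ range (n + 1), a k < a n / (1 - q) := by
  have hq1' : 0 < 1 - q := sub_pos.mpr hq1
  induction n with
  | zero =>
    rw [sum_range_one, lt_div_iff₀ hq1']
    nlinarith
  | succ n ih =>
    calc ∑ k ∈ range (n + 2), a k = ∑ k ∈ range (n + 1), a k + a (n + 1) := sum_range_succ _ _
      _ < a n / (1 - q) + a (n + 1) := by gcongr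
      _ ≤ q * a (n + 1) / (1 - q) + a (n + 1) := by gcongr; exact ha n
      _ = a (n + 1) / (1 - q) := by field_simp; ring

noncomputable def littleQLegendreHaarWeight (q : ℝ) (n : ℕ) : ℝ :=
  (1 / q ^ n) * (1 - q ^ (2 * n + 1)) / (1 - q)

namespace littleQLegendreHaarWeight

theorem zero {q : ℝ} (hq : q ≠ 1) : littleQLegendreHaarWeight q 0 = 1 := by
  simp [littleQLegendreHaarWeight, sub_ne_zero.mpr hq.symm]

theorem le_mul_succ {q : ℝ} (hq0 : 0 < q) (hq1 : q < 1) (n : ℕ) :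
    littleQLegendreHaarWeight q n ≤ q * littleQLegendreHaarWeight q (n + 1) := by
  have hshift : q * littleQLegendreHaarWeight q (n + 1)
      = (1 / q ^ n) * (1 - q ^ (2 * n + 3)) / (1 - q) := by
    unfold littleQLegendreHaarWeight
    field_simp
    ring
  have hpow : q ^ (2 * n + 3) ≤ q ^ (2 * n + 1) :=
    pow_le_pow_of_le_one hq0.le hq1.le (by omega)
  rw [hshift, littleQLegendreHaarWeight]
  gcongr

end littleQLegendreHaarWeight

theorem little_q_legendre_haar_sum_lt
    (q : ℝ) (hq : q ∈ Set.Ioo (0:ℝ) 1) (h : ℕ → ℝ)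
    (hh : ∀ n : ℕ, h n = (1 / q ^ n) * (1 - q ^ (2 * n + 1)) / (1 - q)) (n : ℕ) :
    ∑ k ∈ Finset.range (n + 1), h k < h n / (1 - q) := by
  obtain ⟨hq0, hq1⟩ := hq
  obtain rfl : h = littleQLegendreHaarWeight q := funext hh
  refine sum_range_succ_lt_div_one_sub_of_le_mul hq0 hq1 ?_
    (littleQLegendreHaarWeight.le_mul_succ hq0 hq1) n
  rw [littleQLegendreHaarWeight.zero hq1.ne]
  exact one_pos
end

section
/- Let q ∈ (0,1) and N = ⌈log 4 / log(1/q) − 1⌉. For the little q-Legendre coefficients, C_n(n+k) := (b_{n+k+1} − P_1(1−q^n))/a_{n+k+1} > q^{−(k+1)} − 2 for all n, k ∈ ℕ, where P_1(x) = (q+1)x − q. -/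
theorem little_q_legendre_C_lower_bound
    (q : ℝ) (hq : q ∈ Set.Ioo (0:ℝ) 1) (a b : ℕ → ℝ) (P₁ : ℝ → ℝ)
    (ha : ∀ n : ℕ, 1 ≤ n →
      a n = q ^ n * (1 + q) * (1 - q ^ (n + 1)) / ((1 - q ^ (2 * n + 1)) * (1 + q ^ (n + 1))))
    (hb : ∀ n : ℕ, 1 ≤ n →
      b n = (1 - q ^ n) * (1 - q ^ (n + 1)) / ((1 + q ^ n) * (1 + q ^ (n + 1))))
    (hP : ∀ x : ℝ, P₁ x = (q + 1) * x - q)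
    (n k : ℕ) :
    (b (n + k + 1) - P₁ (1 - q ^ n)) / a (n + k + 1) > 1 / q ^ (k + 1) - 2 := by
  obtain ⟨hq0, hq1⟩ := hq
  rw [ha (n+k+1) (by omega), hb (n+k+1) (by omega), hP]
  set x : ℝ := q ^ (n + k + 1) with hxdef
  set y : ℝ := q ^ (k + 1) with hydef
  set z : ℝ := q ^ n with hzdef
  have hzy : z * y = x := by rw [hxdef, hydef, hzdef, ← pow_add]; ring_nf
  have hx0 : 0 < x := pow_pos hq0 _
  have hx1 : x < 1 := pow_lt_one₀ hq0.le hq1 (by omega)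
  have hy0 : 0 < y := pow_pos hq0 _
  have e1 : q ^ (n + k + 1 + 1) = q * x := by rw [hxdef, ← pow_succ']
  have e2 : q ^ (2 * (n + k + 1) + 1) = q * x ^ 2 := by
    rw [hxdef, ← pow_mul, ← pow_succ']; ring_nf
  rw [e1, e2]
  have hqx1 : q * x < 1 := by nlinarith
  have h1 : (0:ℝ) < 1 - q * x := by linarith
  have h2 : (0:ℝ) < 1 - q * x ^ 2 := by nlinarith
  have h3 : (0:ℝ) < 1 + x := by linarith
  have h4 : (0:ℝ) < 1 + q * x := by nlinarith
  have hA : 0 < x * (1 + q) * (1 - q * x) / ((1 - q * x ^ 2) * (1 + q * x)) := by positivity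
  rw [gt_iff_lt, lt_div_iff₀ hA]
  have hz : z = x / y := by field_simp; linarith [hzy]
  rw [hz]
  have key : (1 - x) * (1 - q * x) / ((1 + x) * (1 + q * x)) - ((q + 1) * (1 - x / y) - q)
      = (q + 1) * (x / y) - 2 * (x * (1 + q) / ((1 + x) * (1 + q * x))) := by
    field_simp
    ring
  rw [key]
  have c1 : x * (1 + q) * (1 - q * x) / ((1 - q * x ^ 2) * (1 + q * x)) ≤ (1 + q) * x := by
    rw [div_le_iff₀ (by positivity)]
    have h6 : 0 ≤ x * (1 + q) * (q * x) * (2 - x - q * x ^ 2) := by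
      have h7 : (0:ℝ) ≤ 2 - x - q * x ^ 2 := by nlinarith
      have h8 : (0:ℝ) ≤ x * (1 + q) * (q * x) :=
        le_of_lt (mul_pos (mul_pos hx0 (by linarith)) (mul_pos hq0 hx0))
      exact mul_nonneg h8 h7
    nlinarith [h6]
  have c2 : x * (1 + q) / ((1 + x) * (1 + q * x))
      < x * (1 + q) * (1 - q * x) / ((1 - q * x ^ 2) * (1 + q * x)) := by
    rw [div_lt_div_iff₀ (by positivity) (by positivity)]
    have h7 : 0 < x ^ 2 * (1 + q) * (1 + q * x) * (1 - q) :=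
      mul_pos (mul_pos (mul_pos (pow_pos hx0 2) (by linarith)) h4) (by linarith)
    nlinarith [h7]
  have h5 : (1 / y) * (x * (1 + q) * (1 - q * x) / ((1 - q * x ^ 2) * (1 + q * x)))
      ≤ (q + 1) * (x / y) := by
    calc (1 / y) * (x * (1 + q) * (1 - q * x) / ((1 - q * x ^ 2) * (1 + q * x)))
        ≤ (1 / y) * ((1 + q) * x) :=
          mul_le_mul_of_nonneg_left c1 (by positivity)
      _ = (q + 1) * (x / y) := by ring
  have expand : (1 / y - 2) * (x * (1 + q) * (1 - q * x) / ((1 - q * x ^ 2) * (1 + q * x)))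
      = (1 / y) * (x * (1 + q) * (1 - q * x) / ((1 - q * x ^ 2) * (1 + q * x)))
        - 2 * (x * (1 + q) * (1 - q * x) / ((1 - q * x ^ 2) * (1 + q * x))) := by ring
  rw [expand]
  linarith [h5, c2]
end

section
/- Let q ∈ (0,1). For the little q-Legendre coefficients, B_n(k) := (b_{n+k+1} − P_1(1−q^n)) q^k / c_{n+k+1} satisfies B_n(k) > (1 − 2q^{k+1})/q for all n, k ∈ ℕ; in particular B_n(k) > 1/(2q) whenever k ≥ ⌈log 4/log(1/q) − 1⌉. -/
set_option maxHeartbeats 1600000 in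
theorem little_q_legendre_B_lower_bound
    (q : ℝ) (hq : q ∈ Set.Ioo (0:ℝ) 1) (c b : ℕ → ℝ) (P₁ : ℝ → ℝ)
    (hc : ∀ n : ℕ, 1 ≤ n →
      c n = q ^ n * (1 + q) * (1 - q ^ n) / ((1 - q ^ (2 * n + 1)) * (1 + q ^ n)))
    (hb : ∀ n : ℕ, 1 ≤ n →
      b n = (1 - q ^ n) * (1 - q ^ (n + 1)) / ((1 + q ^ n) * (1 + q ^ (n + 1))))
    (hP : ∀ x : ℝ, P₁ x = (q + 1) * x - q)
    (n k : ℕ) :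
    (b (n + k + 1) - P₁ (1 - q ^ n)) * q ^ k / c (n + k + 1) > (1 - 2 * q ^ (k + 1)) / q ∧
      ((k : ℤ) ≥ ⌈Real.log 4 / Real.log (1 / q) - 1⌉ →
        (b (n + k + 1) - P₁ (1 - q ^ n)) * q ^ k / c (n + k + 1) > 1 / (2 * q)) := by
  obtain ⟨hq0, hq1⟩ := hq
  have hm : 1 ≤ n + k + 1 := by omega
  have hx0 : (0:ℝ) < q ^ n := pow_pos hq0 n
  have hx1 : q ^ n ≤ 1 := pow_le_one₀ hq0.le hq1.le
  have hy0 : (0:ℝ) < q ^ k := pow_pos hq0 k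
  have hy1 : q ^ k ≤ 1 := pow_le_one₀ hq0.le hq1.le
  set x := q ^ n with hxdef
  set y := q ^ k with hydef
  have e1 : q ^ (n + k + 1) = q * x * y := by rw [hxdef, hydef]; ring
  have e2 : q ^ (n + k + 1 + 1) = q * (q * x * y) := by rw [hxdef, hydef]; ring
  have e3 : q ^ (2 * (n + k + 1) + 1) = q * (q * x * y) ^ 2 := by rw [hxdef, hydef]; ring
  have e4 : q ^ (k + 1) = q * y := by rw [hydef]; ring
  have hxy : x * y ≤ 1 := mul_le_one₀ hx1 hy0.le hy1
  have ha0 : (0:ℝ) < q * x * y := by positivity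
  have ha1 : q * x * y < 1 := by nlinarith
  have hA : (0:ℝ) < 1 + q * x * y := by linarith
  have hB : (0:ℝ) < 1 + q * (q * x * y) := by positivity
  have hC : (0:ℝ) < 1 - q * (q * x * y) ^ 2 := by nlinarith
  have hD : (0:ℝ) < 1 - q * x * y := by linarith
  have hE : (0:ℝ) < 1 - q * (q * x * y) := by nlinarith
  -- the key positive quantity
  have hK : 0 < (1 + q * (q * x * y)) * (2 - q * (q * x * y) - q * (q * x * y) ^ 2)
      - 2 * (q * y) * (1 - q) := by
    have h2 : 0 < 2 - q * (q * x * y) - q * (q * x * y) ^ 2 := by nlinarith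
    have h3 : 0 ≤ q * (q * x * y) * (2 - q * (q * x * y) - q * (q * x * y) ^ 2) := by positivity
    nlinarith [mul_nonneg (mul_nonneg (mul_nonneg hq0.le hq0.le) hy0.le) (sub_nonneg.2 hx1),
      mul_nonneg hy0.le (sub_nonneg.2 hy1),
      mul_nonneg (mul_nonneg hq0.le hy0.le) (sub_nonneg.2 hy1),
      mul_pos hq0 hy0, sq_nonneg (1 - q * y), sq_nonneg (x * y),
      mul_nonneg (mul_nonneg hq0.le hq0.le) (mul_nonneg hy0.le hy0.le)]
  -- the exact identity
  have hmain : (b (n + k + 1) - P₁ (1 - q ^ n)) * q ^ k / c (n + k + 1)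
      = (1 - 2 * q ^ (k + 1)) / q
        + (q * x * y) * ((1 + q * (q * x * y)) * (2 - q * (q * x * y) - q * (q * x * y) ^ 2)
            - 2 * (q * y) * (1 - q))
          / (q * (1 - q * x * y) * (1 + q * (q * x * y))) := by
    rw [hb _ hm, hc _ hm, hP, e1, e2, e3, e4]
    field_simp
    ring
  have hpos : 0 < (q * x * y) * ((1 + q * (q * x * y)) * (2 - q * (q * x * y) - q * (q * x * y) ^ 2)
        - 2 * (q * y) * (1 - q))
      / (q * (1 - q * x * y) * (1 + q * (q * x * y))) := by positivity
  have h1 : (b (n + k + 1) - P₁ (1 - q ^ n)) * q ^ k / c (n + k + 1) > (1 - 2 * q ^ (k + 1)) / q := by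
    rw [hmain]; linarith
  refine ⟨h1, fun hk => ?_⟩
  -- second part
  have hlogq : 0 < Real.log (1 / q) := by
    rw [Real.log_div one_ne_zero (ne_of_gt hq0), Real.log_one]
    have := Real.log_neg hq0 hq1
    linarith
  have hkr : Real.log 4 / Real.log (1 / q) - 1 ≤ (k : ℝ) := by
    have := Int.ceil_le.mp hk
    exact_mod_cast this
  have hk1 : Real.log 4 / Real.log (1 / q) ≤ (k : ℝ) + 1 := by linarith
  have h4 : Real.log 4 ≤ ((k : ℝ) + 1) * Real.log (1 / q) := (div_le_iff₀ hlogq).mp hk1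
  have h5 : (4:ℝ) ≤ (1 / q) ^ (k + 1) := by
    have h6 : Real.log 4 ≤ Real.log ((1 / q) ^ (k + 1)) := by
      rw [Real.log_pow]; push_cast; linarith
    have h7 : (0:ℝ) < (1 / q) ^ (k + 1) := by positivity
    exact (Real.log_le_log_iff (by norm_num) h7).mp h6
  have h8 : q ^ (k + 1) ≤ 1 / 4 := by
    rw [one_div, inv_pow] at h5
    have hqk : (0:ℝ) < q ^ (k + 1) := pow_pos hq0 _
    rw [le_inv_comm₀ (by norm_num) hqk] at h5
    linarith
  have h9 : 1 / (2 * q) ≤ (1 - 2 * q ^ (k + 1)) / q := by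
    rw [div_le_div_iff₀ (by positivity) hq0]
    nlinarith [mul_nonneg hq0.le (sub_nonneg.2 h8)]
  linarith
end

section
/- If a chain sequence (Λ_n)_{n≥1} satisfies Λ_n > 1/4 for all n, then its minimal parameter sequence (m_n)_{n≥0} (the one with m_0 = 0) is strictly increasing. -/
theorem chain_sequence_minimal_params_strict_mono
    (Λ m : ℕ → ℝ)
    (hΛ : ∀ n : ℕ, 1 ≤ n → Λ n ∈ Set.Ioo (0:ℝ) 1)
    (hm0 : m 0 = 0) (hm : ∀ n : ℕ, 1 ≤ n → m n ∈ Set.Ioo (0:ℝ) 1)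
    (hmΛ : ∀ n : ℕ, 1 ≤ n → Λ n = m n * (1 - m (n - 1)))
    (hquarter : ∀ n : ℕ, 1 ≤ n → 1 / 4 < Λ n) :
    StrictMono m := by
  apply strictMono_nat_of_lt_succ
  intro n
  cases n with
  | zero =>
    rw [hm0]
    exact (hm 1 le_rfl).1
  | succ k =>
    have h1 : 1 ≤ k + 2 := by omega
    have heq := hmΛ (k + 2) h1
    have hq := hquarter (k + 2) h1
    have hmk := hm (k + 1) (by omega)
    have hmk2 := hm (k + 2) h1
    have hred : k + 2 - 1 = k + 1 := rfl
    rw [hred] at heq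
    by_contra h
    push_neg at h
    have hmk1 : m (k + 1) < 1 := hmk.2
    have hpos : 0 < m (k + 2) := hmk2.1
    nlinarith [sq_nonneg (m (k + 1) - 1/2)]
end

section
/- Let α > −1/2, λ ≥ 0, ν ≥ 0 and define φ(x) = (x+ν)(x+ν+2α)/((2x+2ν+2α+2λ+1)(2x+2ν+2α+2λ−1)) for x ≥ 1. If λ ≥ |α| + 1/2, then φ is strictly increasing on [1,∞). -/
theorem assoc_pollaczek_phi_strict_mono_large_lambda
    (α lam ν : ℝ) (hα : α > -(1/2)) (hlam : lam ≥ 0) (hν : ν ≥ 0)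
    (h : lam ≥ |α| + 1/2) :
    StrictMonoOn
      (fun x : ℝ =>
        (x + ν) * (x + ν + 2 * α) /
          ((2 * x + 2 * ν + 2 * α + 2 * lam + 1) * (2 * x + 2 * ν + 2 * α + 2 * lam - 1)))
      (Set.Ici (1:ℝ)) := by
  have habs1 := le_abs_self α
  have habs2 := neg_abs_le α
  have hc : 2 * α + 2 * lam ≥ 1 := by linarith
  have hlam' : lam ≥ 1/2 := by have := abs_nonneg α; linarith
  intro x hx y hy hxy
  simp only [Set.mem_Ici] at hx hy
  have hDx : (2 * x + 2 * ν + 2 * α + 2 * lam + 1) * (2 * x + 2 * ν + 2 * α + 2 * lam - 1) > 0 := by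
    nlinarith
  have hDy : (2 * y + 2 * ν + 2 * α + 2 * lam + 1) * (2 * y + 2 * ν + 2 * α + 2 * lam - 1) > 0 := by
    nlinarith
  simp only
  rw [div_lt_div_iff₀ hDx hDy]
  have h1 : y - x > 0 := by linarith
  have h2 : (8 * lam) * ((x + ν) * (y + ν)) +
      ((2 * α + 2 * lam) ^ 2 - 1) * ((x + ν) + (y + ν) + 2 * α) > 0 := by
    have hu : x + ν ≥ 1 := by linarith
    have hv : y + ν ≥ 1 := by linarith
    have huv : (x + ν) * (y + ν) ≥ 1 := by nlinarith
    have hcsq : (2 * α + 2 * lam) ^ 2 - 1 ≥ 0 := by nlinarith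
    nlinarith [mul_nonneg hcsq (by linarith : (x + ν) + (y + ν) + 2 * α ≥ 0)]
  nlinarith [mul_pos h1 h2]
end

section
/- Let α ≥ 0, −α + 1/2 < λ < α + 1/2, λ > 0, ν ≥ 0. Then η(x) = (8λ(x+ν)+(2α+2λ)^2−1)^2 − (1−(2α−2λ)^2)(1−(2α+2λ)^2) > 0 for all x ≥ 1; consequently φ(x) = (x+ν)(x+ν+2α)/((2x+2ν+2α+2λ+1)(2x+2ν+2α+2λ−1)) is strictly increasing on [1,∞). -/
theorem assoc_pollaczek_eta_pos_and_phi_strict_mono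
    (α lam ν : ℝ) (hα : α ≥ 0) (hlam1 : -α + 1/2 < lam) (hlam2 : lam < α + 1/2)
    (hlam0 : lam > 0) (hν : ν ≥ 0) :
    (∀ x : ℝ, 1 ≤ x →
      0 < (8 * lam * (x + ν) + (2 * α + 2 * lam) ^ 2 - 1) ^ 2 -
            (1 - (2 * α - 2 * lam) ^ 2) * (1 - (2 * α + 2 * lam) ^ 2)) ∧
    StrictMonoOn
      (fun x : ℝ =>
        (x + ν) * (x + ν + 2 * α) /
          ((2 * x + 2 * ν + 2 * α + 2 * lam + 1) * (2 * x + 2 * ν + 2 * α + 2 * lam - 1)))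
      (Set.Ici (1:ℝ)) := by
  have hs : 2 * α + 2 * lam > 1 := by linarith
  have hs2 : (2 * α + 2 * lam) ^ 2 - 1 > 0 := by nlinarith
  have hsd : 0 ≤ (2 * α + 2 * lam) ^ 2 - (2 * α - 2 * lam) ^ 2 := by
    nlinarith [mul_nonneg hlam0.le hα]
  constructor
  · intro x hx
    have hu : 0 < 8 * lam * (x + ν) := by nlinarith
    nlinarith [mul_pos hu (by nlinarith : (0:ℝ) < 8 * lam * (x + ν) + 2 * (2 * α + 2 * lam) ^ 2 - 2),
      mul_nonneg hsd hs2.le]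
  · intro x hx y hy hxy
    simp only [Set.mem_Ici] at hx hy
    have hx1 : (2 * x + 2 * ν + 2 * α + 2 * lam - 1) > 0 := by linarith
    have hx2 : (2 * x + 2 * ν + 2 * α + 2 * lam + 1) > 0 := by linarith
    have hy1 : (2 * y + 2 * ν + 2 * α + 2 * lam - 1) > 0 := by linarith
    have hy2 : (2 * y + 2 * ν + 2 * α + 2 * lam + 1) > 0 := by linarith
    simp only
    rw [div_lt_div_iff₀ (by positivity) (by positivity)]
    nlinarith [mul_pos (by linarith : (0:ℝ) < y - x)
        (mul_pos hlam0 (mul_pos (by linarith : (0:ℝ) < x + ν) (by linarith : (0:ℝ) < y + ν))),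
      mul_pos (by linarith : (0:ℝ) < y - x)
        (mul_pos hs2 (by linarith : (0:ℝ) < x + ν + y + ν + 2 * α))]
end

section
/- Let a > 1, b > 0, ν ≥ 0. Define c̃_0 = 0 and c̃_n = (n+ν)/((a+1)(n+ν)+b) for n ≥ 1, ã_n = 1 − c̃_n; define c_0 = 0, c_1 = c̃_1 (aν+b)/((a+1)ν+b), and c_n = c̃_n ã_{n−1}/(1−c_{n−1}) for n ≥ 2. Then the sequence (c_n)_{n≥1} is well-defined, contained in (0, 1/(a+1)), satisfies c_n ≤ c̃_n for all n, and is strictly increasing. -/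
/-- The auxiliary coefficients `c̃_n` of the random-walk polynomials. -/
noncomputable def ctilde (a b ν : ℝ) (n : ℕ) : ℝ :=
  if n = 0 then 0 else ((n : ℝ) + ν) / ((a + 1) * ((n : ℝ) + ν) + b)

/-- The recurrence coefficients `c_n` of the random-walk polynomials. -/
noncomputable def cseq (a b ν : ℝ) : ℕ → ℝ
  | 0 => 0
  | 1 => ctilde a b ν 1 * (a * ν + b) / ((a + 1) * ν + b)
  | (n + 2) => ctilde a b ν (n + 2) * (1 - ctilde a b ν (n + 1)) / (1 - cseq a b ν (n + 1))

lemma ctilde_bounds (a b ν : ℝ) (ha : a > 1) (hb : b > 0) (hν : ν ≥ 0) {n : ℕ} (hn : 1 ≤ n) :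
    0 < ctilde a b ν n ∧ ctilde a b ν n < 1 / (a + 1) := by
  rw [ctilde, if_neg (by omega)]
  have h1 : (1:ℝ) ≤ (n:ℝ) := by exact_mod_cast hn
  have hnum : (0:ℝ) < (n:ℝ) + ν := by linarith
  have hden : (0:ℝ) < (a + 1) * ((n:ℝ) + ν) + b := by nlinarith
  constructor
  · positivity
  · rw [div_lt_div_iff₀ hden (by linarith)]
    nlinarith

lemma ctilde_mono (a b ν : ℝ) (ha : a > 1) (hb : b > 0) (hν : ν ≥ 0) {n : ℕ} (hn : 1 ≤ n) :
    ctilde a b ν n < ctilde a b ν (n + 1) := by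
  rw [ctilde, if_neg (by omega), ctilde, if_neg (by omega)]
  push_cast
  have h1 : (1:ℝ) ≤ (n:ℝ) := by exact_mod_cast hn
  have hd1 : (0:ℝ) < (a + 1) * ((n:ℝ) + ν) + b := by nlinarith
  have hd2 : (0:ℝ) < (a + 1) * ((n:ℝ) + 1 + ν) + b := by nlinarith
  rw [div_lt_div_iff₀ hd1 hd2]
  nlinarith

lemma cseq_key (a b ν : ℝ) (ha : a > 1) (hb : b > 0) (hν : ν ≥ 0) :
    ∀ m : ℕ, 0 < cseq a b ν (m + 1) ∧ cseq a b ν (m + 1) ≤ ctilde a b ν (m + 1) := by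
  intro m
  induction m with
  | zero =>
    obtain ⟨hp, _⟩ := ctilde_bounds a b ν ha hb hν (le_refl 1)
    have hden : (0:ℝ) < (a + 1) * ν + b := by nlinarith
    have hnum : (0:ℝ) < a * ν + b := by nlinarith
    constructor
    · show 0 < ctilde a b ν 1 * (a * ν + b) / ((a + 1) * ν + b)
      positivity
    · show ctilde a b ν 1 * (a * ν + b) / ((a + 1) * ν + b) ≤ ctilde a b ν 1
      rw [div_le_iff₀ hden]
      nlinarith
  | succ m ih =>
    obtain ⟨hpos, hle⟩ := ih
    obtain ⟨hp1, hb1⟩ := ctilde_bounds a b ν ha hb hν (n := m + 1) (by omega)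
    obtain ⟨hp2, hb2⟩ := ctilde_bounds a b ν ha hb hν (n := m + 2) (by omega)
    have hhalf : 1 / (a + 1) < 1 / 2 := by
      rw [div_lt_div_iff₀ (by linarith) (by norm_num)]; linarith
    have hlt1 : cseq a b ν (m + 1) < 1 := by linarith
    have hden : (0:ℝ) < 1 - cseq a b ν (m + 1) := by linarith
    constructor
    · show 0 < ctilde a b ν (m + 2) * (1 - ctilde a b ν (m + 1)) / (1 - cseq a b ν (m + 1))
      have : (0:ℝ) < 1 - ctilde a b ν (m + 1) := by linarith
      positivity
    · show ctilde a b ν (m + 2) * (1 - ctilde a b ν (m + 1)) / (1 - cseq a b ν (m + 1)) ≤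
        ctilde a b ν (m + 2)
      rw [div_le_iff₀ hden]
      nlinarith

theorem random_walk_coefficients_properties
    (a b ν : ℝ) (ha : a > 1) (hb : b > 0) (hν : ν ≥ 0) :
    (∀ n : ℕ, 1 ≤ n → cseq a b ν n ∈ Set.Ioo (0:ℝ) (1 / (a + 1))) ∧
    (∀ n : ℕ, cseq a b ν n ≤ ctilde a b ν n) ∧
    (∀ n : ℕ, 1 ≤ n → cseq a b ν n < cseq a b ν (n + 1)) := by
  have key := cseq_key a b ν ha hb hν
  refine ⟨?_, ?_, ?_⟩
  · intro n hn
    obtain ⟨m, rfl⟩ : ∃ m, n = m + 1 := ⟨n - 1, by omega⟩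
    obtain ⟨hp, hle⟩ := key m
    obtain ⟨_, hub⟩ := ctilde_bounds a b ν ha hb hν (n := m + 1) (by omega)
    exact ⟨hp, by linarith⟩
  · intro n
    match n with
    | 0 => simp [cseq, ctilde]
    | m + 1 => exact (key m).2
  · intro n hn
    obtain ⟨m, rfl⟩ : ∃ m, n = m + 1 := ⟨n - 1, by omega⟩
    obtain ⟨hp, hle⟩ := key m
    obtain ⟨hp1, hb1⟩ := ctilde_bounds a b ν ha hb hν (n := m + 1) (by omega)
    have hmono := ctilde_mono a b ν ha hb hν (n := m + 1) (by omega)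
    have hhalf : 1 / (a + 1) < 1 / 2 := by
      rw [div_lt_div_iff₀ (by linarith) (by norm_num)]; linarith
    have hden : (0:ℝ) < 1 - cseq a b ν (m + 1) := by linarith
    show cseq a b ν (m + 1) <
      ctilde a b ν (m + 2) * (1 - ctilde a b ν (m + 1)) / (1 - cseq a b ν (m + 1))
    rw [lt_div_iff₀ hden]
    nlinarith [mul_pos hp hden]
end

section
/- Let α > −1/2, 0 ≤ λ < α + 1/2, ν ≥ 0. Set ρ = sqrt(1 − (2λ/(2α+1))^2), γ = sqrt((2α−2λ+1)/(2α+2λ+1)), s_n = (2α+2λ+1)(n+ν+2α+1)/((2α+1)(2n+2ν+2α+2λ+1)), t_n = 1 − s_n. Define ψ_1 = ρ and ψ_{n+1} = (ρψ_n − t_n)/(s_n ψ_n) for n ≥ 1. Then ψ_n is well-defined and ψ_n ≥ γ (2λn + 2λν + 2α + 1)/(2λn + 2λν + 2α − 2λ + 1) for every n ≥ 1; in particular ψ_n ≥ γ for all n. -/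
/-!
Write `a = 2α + 1`, `l = 2λ`, `m = n + ν`, so that `γ² = (a - l)/(a + l)`, `ρ = γ (a + l)/a`,
`s_n = (a + l)(m + a)/(a(2m + a + l))`, `t_n = (a - l)m/(a(2m + a + l))`, and the claimed bound
is `B(m) = γ (lm + a)/(lm + a - l)`. The recursion `x ↦ (ρx - t_n)/(s_n x) = ρ/s_n - t_n/(s_n x)`
is increasing in `x > 0`, and at `x = B(m)` it equals `B(m + 1) + γ l² m/((m + a)(lm + a))`
(this is where `γ² = (a - l)/(a + l)` enters). Hence `ψ_n ≥ B(n + ν)` propagates by induction,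
starting from `ρ ≥ B(1 + ν)`, which amounts to `l² ν ≥ 0`. Finally `B(m) ≥ γ` as `l ≥ 0`.
-/

open Real

lemma sqrt_one_sub_div_sq_eq {a l : ℝ} (ha : 0 < a) (hal : 0 < a + l) :
    √(1 - (l / a) ^ 2) = √((a - l) / (a + l)) * ((a + l) / a) := by
  have hsplit : 1 - (l / a) ^ 2 = (a - l) / (a + l) * ((a + l) / a) ^ 2 := by
    field_simp
    ring
  rw [hsplit, sqrt_mul' _ (sq_nonneg _), sqrt_sq (by positivity)]

lemma sub_div_mul_le_sub_div_mul {ρ s t x y : ℝ} (hs : 0 < s) (ht : 0 ≤ t) (hy : 0 < y)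
    (hyx : y ≤ x) : (ρ * y - t) / (s * y) ≤ (ρ * x - t) / (s * x) := by
  rw [div_le_div_iff₀ (by positivity) (mul_pos hs (hy.trans_le hyx))]
  nlinarith [mul_le_mul_of_nonneg_left hyx (mul_nonneg ht hs.le)]

noncomputable def psiBound (γ a l m : ℝ) : ℝ := γ * (l * m + a) / (l * m + a - l)

noncomputable def pollaczekStep (γ a l m x : ℝ) : ℝ :=
  (γ * (a + l) / a * x - (a - l) * m / (a * (2 * m + a + l))) /
    ((a + l) * (m + a) / (a * (2 * m + a + l)) * x)

section

variable {γ a l m : ℝ}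

lemma psiBound_denom_pos (ha : 0 < a) (hl : 0 ≤ l) (hm : 1 ≤ m) : 0 < l * m + a - l := by
  nlinarith

lemma le_psiBound (hγ : 0 ≤ γ) (ha : 0 < a) (hl : 0 ≤ l) (hm : 1 ≤ m) :
    γ ≤ psiBound γ a l m := by
  rw [psiBound, le_div_iff₀ (psiBound_denom_pos ha hl hm)]
  nlinarith [mul_nonneg hγ hl]

lemma psiBound_add_one : psiBound γ a l (m + 1) = γ * (l * m + l + a) / (l * m + a) := by
  rw [psiBound]
  congr 1 <;> ring

lemma pollaczekStep_psiBound (ha : 0 < a) (hl : 0 ≤ l) (hm : 1 ≤ m) (hγ : γ ≠ 0)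
    (hγsq : γ ^ 2 = (a - l) / (a + l)) :
    pollaczekStep γ a l m (psiBound γ a l m) =
      psiBound γ a l (m + 1) + γ * l ^ 2 * m / ((m + a) * (l * m + a)) := by
  have hden := psiBound_denom_pos ha hl hm
  have hal : a + l ≠ 0 := by positivity
  have hlma : l * m + a ≠ 0 := by nlinarith
  have hma : m + a ≠ 0 := by linarith
  have h2ma : 2 * m + a + l ≠ 0 := by linarith
  have hsub : a - l = γ ^ 2 * (a + l) := by rw [hγsq, div_mul_cancel₀ _ hal]
  rw [psiBound_add_one]
  simp only [pollaczekStep, psiBound, hsub]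
  field_simp
  ring

lemma psiBound_succ_le_pollaczekStep {x : ℝ} (ha : 0 < a) (hl : 0 ≤ l) (hla : l < a)
    (hm : 1 ≤ m) (hγ : 0 < γ) (hγsq : γ ^ 2 = (a - l) / (a + l))
    (hx : psiBound γ a l m ≤ x) :
    psiBound γ a l (m + 1) ≤ pollaczekStep γ a l m x := by
  have hB : 0 < psiBound γ a l m :=
    div_pos (mul_pos hγ (by nlinarith)) (psiBound_denom_pos ha hl hm)
  calc psiBound γ a l (m + 1)
      ≤ psiBound γ a l (m + 1) + γ * l ^ 2 * m / ((m + a) * (l * m + a)) :=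
        le_add_of_nonneg_right <|
          div_nonneg (by positivity) (mul_nonneg (by linarith) (by nlinarith))
    _ = pollaczekStep γ a l m (psiBound γ a l m) :=
        (pollaczekStep_psiBound ha hl hm hγ.ne' hγsq).symm
    _ ≤ pollaczekStep γ a l m x :=
        sub_div_mul_le_sub_div_mul (by positivity) (div_nonneg (by nlinarith) (by positivity))
          hB hx

end

lemma pollaczekStep_eq_of_coeff {γ α lam ν n s x : ℝ} (ha : 0 < 2 * α + 1)
    (hden : 0 < 2 * n + 2 * ν + 2 * α + 2 * lam + 1)
    (hs : s = (2 * α + 2 * lam + 1) * (n + ν + 2 * α + 1) /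
      ((2 * α + 1) * (2 * n + 2 * ν + 2 * α + 2 * lam + 1))) :
    (γ * (2 * α + 1 + 2 * lam) / (2 * α + 1) * x - (1 - s)) / (s * x) =
      pollaczekStep γ (2 * α + 1) (2 * lam) (n + ν) x := by
  have hden' : 2 * (n + ν) + (2 * α + 1) + 2 * lam ≠ 0 := by linarith
  have hs' : s = (2 * α + 1 + 2 * lam) * (n + ν + (2 * α + 1)) /
      ((2 * α + 1) * (2 * (n + ν) + (2 * α + 1) + 2 * lam)) := by
    rw [hs]
    congr 1 <;> ring
  have hsub : 1 - s = (2 * α + 1 - 2 * lam) * (n + ν) /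
      ((2 * α + 1) * (2 * (n + ν) + (2 * α + 1) + 2 * lam)) := by
    rw [hs']
    field_simp
    ring
  rw [pollaczekStep, hsub, hs']

theorem psiBound_le_of_recurrence {γ a l ν : ℝ} {ψ : ℕ → ℝ} (ha : 0 < a) (hl : 0 ≤ l)
    (hla : l < a) (hν : 0 ≤ ν) (hγ : 0 < γ) (hγsq : γ ^ 2 = (a - l) / (a + l))
    (hψ1 : ψ 1 = γ * (a + l) / a)
    (hψ : ∀ n : ℕ, 1 ≤ n → ψ (n + 1) = pollaczekStep γ a l (n + ν) (ψ n)) :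
    ∀ n : ℕ, 1 ≤ n → psiBound γ a l (n + ν) ≤ ψ n := by
  intro n hn
  induction n, hn using Nat.le_induction with
  | base =>
    rw [hψ1, psiBound, Nat.cast_one, div_le_div_iff₀ (by nlinarith) ha]
    nlinarith [mul_nonneg (mul_nonneg hγ.le (mul_nonneg hl hl)) hν]
  | succ n hn ih =>
    have hm : (1 : ℝ) ≤ n + ν := by linarith [(Nat.one_le_cast (α := ℝ)).mpr hn]
    rw [hψ n hn, Nat.cast_succ, add_right_comm]
    exact psiBound_succ_le_pollaczekStep ha hl hla hm hγ hγsq ih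

theorem assoc_pollaczek_psi_lower_bound
    (α lam ν : ℝ) (hα : α > -(1/2)) (hlam0 : 0 ≤ lam) (hlam : lam < α + 1/2) (hν : ν ≥ 0)
    (ρ γ : ℝ) (s t ψ : ℕ → ℝ)
    (hρ : ρ = Real.sqrt (1 - (2 * lam / (2 * α + 1)) ^ 2))
    (hγ : γ = Real.sqrt ((2 * α - 2 * lam + 1) / (2 * α + 2 * lam + 1)))
    (hs : ∀ n : ℕ, 1 ≤ n →
      s n = (2 * α + 2 * lam + 1) * ((n : ℝ) + ν + 2 * α + 1) /
        ((2 * α + 1) * (2 * n + 2 * ν + 2 * α + 2 * lam + 1)))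
    (ht : ∀ n : ℕ, 1 ≤ n → t n = 1 - s n)
    (hψ1 : ψ 1 = ρ)
    (hψ : ∀ n : ℕ, 1 ≤ n → ψ (n + 1) = (ρ * ψ n - t n) / (s n * ψ n)) :
    ∀ n : ℕ, 1 ≤ n →
      ψ n ≥ γ * (2 * lam * n + 2 * lam * ν + 2 * α + 1) /
          (2 * lam * n + 2 * lam * ν + 2 * α - 2 * lam + 1) ∧
      ψ n ≥ γ := by
  have ha : 0 < 2 * α + 1 := by linarith
  have hal : 0 < 2 * α + 1 + 2 * lam := by linarith
  have hquot : 0 < (2 * α + 1 - 2 * lam) / (2 * α + 1 + 2 * lam) := div_pos (by linarith) hal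
  have hγ' : γ = √((2 * α + 1 - 2 * lam) / (2 * α + 1 + 2 * lam)) := by rw [hγ]; ring_nf
  have hγpos : 0 < γ := hγ' ▸ sqrt_pos.2 hquot
  have hγsq : γ ^ 2 = (2 * α + 1 - 2 * lam) / (2 * α + 1 + 2 * lam) := hγ' ▸ sq_sqrt hquot.le
  have hρ' : ρ = γ * (2 * α + 1 + 2 * lam) / (2 * α + 1) := by
    rw [hρ, sqrt_one_sub_div_sq_eq ha hal, ← hγ', mul_div_assoc]
  have hstep : ∀ n : ℕ, 1 ≤ n →
      ψ (n + 1) = pollaczekStep γ (2 * α + 1) (2 * lam) (n + ν) (ψ n) := by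
    intro n hn
    rw [hψ n hn, ht n hn, hρ']
    exact pollaczekStep_eq_of_coeff ha (by linarith [n.cast_nonneg' (α := ℝ)]) (hs n hn)
  intro n hn
  have hbound := psiBound_le_of_recurrence ha (by linarith) (by linarith) hν hγpos hγsq
    (hψ1.trans hρ') hstep n hn
  have hm : (1 : ℝ) ≤ n + ν := by linarith [(Nat.one_le_cast (α := ℝ)).mpr hn]
  refine ⟨le_of_eq_of_le ?_ hbound, (le_psiBound hγpos.le ha (by linarith) hm).trans hbound⟩
  rw [psiBound]
  congr 1 <;> ring
end
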